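/- Let k ≥ 1, n ≥ 1, and y₁,…,y_{2k} ∈ ℝⁿ with Σ_{ℓ=1}^{k} y_{2ℓ-1} ∧ y_{2ℓ} = 0 (i.e., all angular momentum components J_{α,β}(y) vanish). Then the dimension of the linear span of {y₁,…,y_{2k}} in ℝⁿ is at most k. -/

import Mathlib

open Finset

/-- Index of `y_{2ℓ-1}` (0-based) among the `2k` vectors. -/
def oddIdx {k : ℕ} (ℓ : Fin k) : Fin (2*k) := ⟨2*ℓ.val, by have := ℓ.isLt; omega⟩

/-- Index of `y_{2ℓ}` (0-based) among the `2k` vectors. -/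
def evenIdx {k : ℕ} (ℓ : Fin k) : Fin (2*k) := ⟨2*ℓ.val+1, by have := ℓ.isLt; omega⟩

/-- Euclidean inner product on `ℝⁿ`. -/
noncomputable def ip {n : ℕ} (u v : Fin n → ℝ) : ℝ := ∑ α, u α * v α

/-- The quadratic invariant `Q_{i,j} = Σ_ℓ (x_{i,2ℓ-1} x_{j,2ℓ} - x_{i,2ℓ} x_{j,2ℓ-1})`
where `x_{i,j} = ⟨y_i, y_j⟩`. -/
noncomputable def Qinv {k n : ℕ} (y : Fin (2*k) → Fin n → ℝ) (i j : Fin (2*k)) : ℝ :=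
  ∑ ℓ : Fin k, (ip (y i) (y (oddIdx ℓ)) * ip (y j) (y (evenIdx ℓ))
    - ip (y i) (y (evenIdx ℓ)) * ip (y j) (y (oddIdx ℓ)))

/-- The angular momentum component `J_{α,β}`. -/
noncomputable def angJ {k n : ℕ} (y : Fin (2*k) → Fin n → ℝ) (α β : Fin n) : ℝ :=
  ∑ ℓ : Fin k, (y (oddIdx ℓ) α * y (evenIdx ℓ) β - y (oddIdx ℓ) β * y (evenIdx ℓ) α)


/-!
Let `M` be the `2k × n` matrix whose rows are `y₁, …, y_{2k}`. For `u, v ∈ ℝⁿ` the standard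
symplectic form `ω` on `ℝ^{2k}` satisfies `ω(M u, M v) = Σ_{α,β} u_α v_β J_{α,β}(y)`, so vanishing
angular momentum makes the column space of `M` isotropic. An isotropic subspace for a
nondegenerate form on `ℝ^{2k}` has dimension at most `k`, and the column space has the
dimension of the row space, which is the span of the `y_i`.
-/

open Module

theorem LinearMap.BilinForm.two_mul_finrank_le_of_le_orthogonal {K V : Type*} [Field K]
    [AddCommGroup V] [Module K V] [FiniteDimensional K V] {B : LinearMap.BilinForm K V}
    (hB : B.Nondegenerate) {W : Submodule K V} (hW : W ≤ B.orthogonal W) :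
    2 * finrank K W ≤ finrank K V := by
  have hle := Submodule.finrank_mono hW
  rw [finrank_orthogonal hB] at hle
  have hW_le := W.finrank_le
  omega

section Indices

variable {k : ℕ}

theorem oddIdx_injective : Function.Injective (oddIdx (k := k)) := by
  intro a b h
  simpa [oddIdx, Fin.ext_iff] using h

theorem evenIdx_injective : Function.Injective (evenIdx (k := k)) := by
  intro a b h
  simpa [evenIdx, Fin.ext_iff] using h

theorem oddIdx_ne_evenIdx (a b : Fin k) : oddIdx a ≠ evenIdx b := by
  simp only [oddIdx, evenIdx, ne_eq, Fin.ext_iff]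
  omega

theorem exists_eq_oddIdx_or_eq_evenIdx (i : Fin (2 * k)) :
    ∃ ℓ : Fin k, i = oddIdx ℓ ∨ i = evenIdx ℓ := by
  refine ⟨⟨i / 2, by omega⟩, ?_⟩
  simp only [oddIdx, evenIdx, Fin.ext_iff]
  omega

end Indices

section SympForm

variable (R : Type*) [CommRing R] (k : ℕ)

def sympForm : LinearMap.BilinForm R (Fin (2 * k) → R) :=
  LinearMap.mk₂ R
    (fun u v => ∑ ℓ : Fin k, (u (oddIdx ℓ) * v (evenIdx ℓ) - u (evenIdx ℓ) * v (oddIdx ℓ)))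
    (fun _ _ _ => by
      simp only [Pi.add_apply, ← sum_add_distrib]
      exact sum_congr rfl fun _ _ => by ring)
    (fun _ _ _ => by
      simp only [Pi.smul_apply, smul_eq_mul, mul_sum]
      exact sum_congr rfl fun _ _ => by ring)
    (fun _ _ _ => by
      simp only [Pi.add_apply, ← sum_add_distrib]
      exact sum_congr rfl fun _ _ => by ring)
    (fun _ _ _ => by
      simp only [Pi.smul_apply, smul_eq_mul, mul_sum]
      exact sum_congr rfl fun _ _ => by ring)

variable {R k}

theorem sympForm_apply (u v : Fin (2 * k) → R) :
    sympForm R k u v = ∑ ℓ : Fin k, (u (oddIdx ℓ) * v (evenIdx ℓ) - u (evenIdx ℓ) * v (oddIdx ℓ)) :=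
  rfl

theorem sympForm_isAlt : LinearMap.IsAlt (sympForm R k) := fun u => by
  simp [sympForm_apply, mul_comm]

theorem sympForm_apply_single_evenIdx (u : Fin (2 * k) → R) (ℓ : Fin k) :
    sympForm R k u (Pi.single (evenIdx ℓ) 1) = u (oddIdx ℓ) := by
  simp [sympForm_apply, Pi.single_apply, evenIdx_injective.eq_iff, oddIdx_ne_evenIdx]

theorem sympForm_apply_single_oddIdx (u : Fin (2 * k) → R) (ℓ : Fin k) :
    sympForm R k u (Pi.single (oddIdx ℓ) 1) = -u (evenIdx ℓ) := by
  simp [sympForm_apply, Pi.single_apply, oddIdx_injective.eq_iff, (oddIdx_ne_evenIdx _ _).symm]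

theorem sympForm_nondegenerate : (sympForm R k).Nondegenerate := by
  refine sympForm_isAlt.isRefl.nondegenerate_iff_separatingLeft.mpr fun u hu => funext fun i => ?_
  obtain ⟨ℓ, rfl | rfl⟩ := exists_eq_oddIdx_or_eq_evenIdx i
  · simpa [sympForm_apply_single_evenIdx] using hu (Pi.single (evenIdx ℓ) 1)
  · simpa [sympForm_apply_single_oddIdx] using hu (Pi.single (oddIdx ℓ) 1)

end SympForm

section AngularMomentum

open Matrix

variable {k n : ℕ} (y : Fin (2 * k) → Fin n → ℝ)

theorem angJ_swap (α β : Fin n) : angJ y β α = -angJ y α β := by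
  simp only [angJ, ← sum_neg_distrib]
  exact sum_congr rfl fun _ _ => by ring

theorem angJ_eq_zero_of_forall_lt (h : ∀ α β : Fin n, α < β → angJ y α β = 0) (α β : Fin n) :
    angJ y α β = 0 := by
  rcases lt_trichotomy α β with hlt | rfl | hgt
  · exact h α β hlt
  · linarith [angJ_swap y α α]
  · rw [angJ_swap, h β α hgt, neg_zero]

theorem sympForm_mulVec_mulVec_eq_sum_angJ (u v : Fin n → ℝ) :
    sympForm ℝ k (Matrix.of y *ᵥ u) (Matrix.of y *ᵥ v) = ∑ α, ∑ β, u α * v β * angJ y α β := by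
  simp only [sympForm_apply, mulVec, dotProduct, of_apply, sum_mul_sum, ← sum_sub_distrib]
  simp only [angJ, mul_sum]
  rw [sum_comm]
  refine sum_congr rfl fun α _ => ?_
  rw [sum_comm]
  exact sum_congr rfl fun β _ => sum_congr rfl fun ℓ _ => by ring

theorem range_mulVecLin_le_orthogonal (hJ : ∀ α β : Fin n, angJ y α β = 0) :
    LinearMap.range (Matrix.of y).mulVecLin ≤
      (sympForm ℝ k).orthogonal (LinearMap.range (Matrix.of y).mulVecLin) := by
  rintro _ ⟨v, rfl⟩ _ ⟨u, rfl⟩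
  show sympForm ℝ k (of y *ᵥ u) (of y *ᵥ v) = 0
  simp [sympForm_mulVec_mulVec_eq_sum_angJ, hJ]

end AngularMomentum

theorem finrank_span_le_of_J_eq_zero_general (k n : ℕ)
    (y : Fin (2*k) → Fin n → ℝ)
    (h : ∀ α β : Fin n, α < β → angJ y α β = 0) :
    Module.finrank ℝ ↥(Submodule.span ℝ (Set.range y)) ≤ k := by
  have hW := LinearMap.BilinForm.two_mul_finrank_le_of_le_orthogonal sympForm_nondegenerate
    (range_mulVecLin_le_orthogonal y (angJ_eq_zero_of_forall_lt y h))
  rw [finrank_fin_fun] at hW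
  calc finrank ℝ (Submodule.span ℝ (Set.range y)) = (Matrix.of y).rank :=
        (Matrix.of y).rank_eq_finrank_span_row.symm
    _ ≤ k := by rw [Matrix.rank]; omega

/-- If all angular momentum components vanish, the span of `y₁,…,y_{2k}` has dimension at
most `k`. -/
theorem finrank_span_le_of_J_eq_zero (k n : ℕ) (hk : 1 ≤ k) (hn : 1 ≤ n)
    (y : Fin (2*k) → Fin n → ℝ)
    (h : ∀ α β : Fin n, α < β → angJ y α β = 0) :
    Module.finrank ℝ ↥(Submodule.span ℝ (Set.range y)) ≤ k :=
  finrank_span_le_of_J_eq_zero_general k n y h
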